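/- With X₀(φ) = (φ − U^{-1}φ)⊗U⁰ and X_{±n}(ψ) as above (n > 0), one has [X₀(φ), X_{±n}(ψ)] = ±X_{±n}(K_nφ·ψ) where K_n = (I − U^{-1})(I − Uⁿ) = I − U^{-1} + U^{n-1} − Uⁿ. -/
import Mathlib

noncomputable section
open MeasureTheory

variable {X : Type*} [TopologicalSpace X] [MeasurableSpace X]

/-- `n`-th iterate of a homeomorphism, `n : ℕ`. -/
def iterH (T : X ≃ₜ X) : ℕ → X ≃ₜ X
  | 0 => Homeomorph.refl X
  | n + 1 => (iterH T n).trans T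

/-- `n`-th power of a homeomorphism, `n : ℤ` (so `zpowH T n = Tⁿ`). -/
def zpowH (T : X ≃ₜ X) : ℤ → X ≃ₜ X
  | Int.ofNat n => iterH T n
  | Int.negSucc n => (iterH T (n + 1)).symm

/-- The operator `Uⁿ` on continuous functions: `(Uⁿψ)(x) = ψ(Tⁿ x)`. -/
def Un (T : X ≃ₜ X) (n : ℤ) (ψ : C(X, ℂ)) : C(X, ℂ) := ψ.comp (zpowH T n)

/-- The crossed product multiplication on `A(X,T) = ⊕ₙ C(X) ⊗ Uⁿ`,
`(φ⊗Uⁿ)·(ψ⊗Uᵐ) = (φ·Uⁿψ)⊗U^(n+m)`; the element `φ⊗Uⁿ` is `Finsupp.single n φ`. -/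
def amul (T : X ≃ₜ X) (a b : ℤ →₀ C(X, ℂ)) : ℤ →₀ C(X, ℂ) :=
  a.sum fun n φ => b.sum fun m ψ => Finsupp.single (n + m) (φ * Un T n ψ)
/-- The Lie bracket `[a,b] = ab - ba` on `A(X,T)`. -/
def abr (T : X ≃ₜ X) (a b : ℤ →₀ C(X, ℂ)) : ℤ →₀ C(X, ℂ) := amul T a b - amul T b a

/-- `X₀(φ) = (φ − U^{-1}φ)⊗U⁰`. -/
def X0A (T : X ≃ₜ X) (φ : C(X, ℂ)) : ℤ →₀ C(X, ℂ) :=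
  Finsupp.single 0 (φ - Un T (-1) φ)

/-- The operator `K_n = I − U^{-1} + U^{n-1} − Uⁿ`. -/
def KnOp (T : X ≃ₜ X) (n : ℤ) (φ : C(X, ℂ)) : C(X, ℂ) :=
  φ - Un T (-1) φ + Un T (n - 1) φ - Un T n φ


set_option linter.unusedSectionVars false

lemma iterH_toEquiv (T : X ≃ₜ X) (n : ℕ) :
    (iterH T n).toEquiv = (T.toEquiv : Equiv.Perm X) ^ n := by
  induction n with
  | zero => rfl
  | succ k ih =>
    show ((iterH T k).trans T).toEquiv = _
    rw [pow_succ']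
    ext x
    simp [Homeomorph.trans, ih, Equiv.Perm.mul_apply]

lemma zpowH_toEquiv (T : X ≃ₜ X) (n : ℤ) :
    (zpowH T n).toEquiv = (T.toEquiv : Equiv.Perm X) ^ n := by
  cases n with
  | ofNat k => simp [zpowH, iterH_toEquiv]
  | negSucc k =>
    show ((iterH T (k+1)).symm).toEquiv = _
    rw [zpow_negSucc]
    ext x
    simp [Homeomorph.symm, iterH_toEquiv, Equiv.Perm.inv_def]

lemma zpowH_apply (T : X ≃ₜ X) (n : ℤ) (x : X) :
    zpowH T n x = ((T.toEquiv : Equiv.Perm X) ^ n) x := by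
  rw [← zpowH_toEquiv]; rfl

lemma Un_Un (T : X ≃ₜ X) (k m : ℤ) (ψ : C(X, ℂ)) :
    Un T k (Un T m ψ) = Un T (m + k) ψ := by
  ext x
  simp [Un, zpowH_apply, ← Equiv.Perm.mul_apply, ← zpow_add]

lemma Un_zero (T : X ≃ₜ X) (ψ : C(X, ℂ)) : Un T 0 ψ = ψ := by
  ext x; simp [Un, zpowH, iterH]

lemma Un_sub (T : X ≃ₜ X) (n : ℤ) (f g : C(X, ℂ)) :
    Un T n (f - g) = Un T n f - Un T n g := rfl

lemma Un_add (T : X ≃ₜ X) (n : ℤ) (f g : C(X, ℂ)) :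
    Un T n (f + g) = Un T n f + Un T n g := rfl

lemma Un_mul (T : X ≃ₜ X) (n : ℤ) (f g : C(X, ℂ)) :
    Un T n (f * g) = Un T n f * Un T n g := rfl

lemma amul_single (T : X ≃ₜ X) (a b : ℤ) (f g : C(X, ℂ)) :
    amul T (Finsupp.single a f) (Finsupp.single b g) =
      Finsupp.single (a + b) (f * Un T a g) := by
  rw [amul, Finsupp.sum_single_index, Finsupp.sum_single_index] <;>
    simp [Finsupp.sum_single_index, Un]

lemma abr_X0 (T : X ≃ₜ X) (m : ℤ) (φ g : C(X, ℂ)) :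
    abr T (X0A T φ) (Finsupp.single m g) =
      Finsupp.single m (((φ - Un T (-1) φ) - Un T m (φ - Un T (-1) φ)) * g) := by
  rw [abr, X0A, amul_single, amul_single, zero_add, add_zero, Un_zero,
    ← Finsupp.single_sub]
  congr 1
  ring

/-- `[X₀(φ), X_{±n}(ψ)] = ±X_{±n}(K_n φ·ψ)` for `n > 0`, where
`X_n(ψ) = ψ⊗Uⁿ`, `X₋ₙ(ψ) = (U^{-n}ψ)⊗U^{-n}`, and moreover
`K_n = (I − U^{-1})(I − Uⁿ)`. -/
theorem cartan_action_on_Xn (T : X ≃ₜ X) (n : ℤ) (hn : 0 < n) (φ ψ : C(X, ℂ)) :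
    abr T (X0A T φ) (Finsupp.single n ψ) = Finsupp.single n (KnOp T n φ * ψ) ∧
    abr T (X0A T φ) (Finsupp.single (-n) (Un T (-n) ψ)) =
      -Finsupp.single (-n) (Un T (-n) (KnOp T n φ * ψ)) ∧
    KnOp T n φ = (φ - Un T n φ) - Un T (-1) (φ - Un T n φ) := by
  refine ⟨?_, ?_, ?_⟩
  · rw [abr_X0]
    congr 1
    rw [KnOp, Un_sub, Un_Un]
    ring_nf
  · rw [abr_X0, ← Finsupp.single_neg]
    congr 1
    simp only [KnOp, Un_mul, Un_sub, Un_add, Un_Un]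
    ring_nf
    simp [Un_zero]
    ring_nf
  · rw [KnOp, Un_sub, Un_Un]
    ring_nf
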